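/- arXiv:2401.01274 — 6 statements merged into one kernel-verified Lean document; each statement's English description precedes it below -/
import Mathlib

section
/- Let m₁, m₂ be natural numbers, let G be a (simple) graph, and let vw be an edge of G such that deg(v) > m₁, deg(w) > m₂, and |N(v) ∪ N(w)| ≥ m₁ + m₂ + 2, where N(x) denotes the neighbourhood of x in G. Then G contains a copy of the double star S(m₁, m₂) (as a subgraph). -/
open SimpleGraph

/-- `G` contains a copy of `H` as a subgraph, i.e. there is an injective graph
homomorphism from `H` to `G`. -/
def Contains {V W : Type*} (G : SimpleGraph V) (H : SimpleGraph W) : Prop :=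
  ∃ f : H →g G, Function.Injective f

/-- The double star `S(m₁, m₂)`: two adjacent centres `0` and `1`, where centre `0`
has `m₁` leaves (the vertices `2, …, m₁ + 1`) and centre `1` has `m₂` leaves
(the vertices `m₁ + 2, …, m₁ + m₂ + 1`). -/
def DoubleStar (m₁ m₂ : ℕ) : SimpleGraph (Fin (m₁ + m₂ + 2)) :=
  SimpleGraph.fromRel (fun i j =>
    (i.val = 0 ∧ 0 < j.val ∧ j.val < m₁ + 2) ∨ (i.val = 1 ∧ m₁ + 2 ≤ j.val))

/-!
Put `X = N(v) \ {w}` and `Y = N(w) \ {v}`. Then `|X| ≥ m₁`, `|Y| ≥ m₂` and `|X ∪ Y| ≥ m₁ + m₂`,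
which is exactly what is needed to pick disjoint `S ⊆ X`, `T ⊆ Y` with `|S| = m₁`, `|T| = m₂`.
The edge `vw` together with the stars from `v` to `S` and from `w` to `T` is the double star.
-/

open Finset

theorem Finset.exists_disjoint_subsets_card_eq {α : Type*} [DecidableEq α] {X Y : Finset α}
    {m₁ m₂ : ℕ} (hX : m₁ ≤ #X) (hY : m₂ ≤ #Y) (hXY : m₁ + m₂ ≤ #(X ∪ Y)) :
    ∃ S ⊆ X, ∃ T ⊆ Y, #S = m₁ ∧ #T = m₂ ∧ Disjoint S T := by
  suffices ∃ S ⊆ X, #S = m₁ ∧ m₂ ≤ #(Y \ S) by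
    obtain ⟨S, hSX, hS, hYS⟩ := this
    obtain ⟨T, hTYS, hT⟩ := exists_subset_card_eq hYS
    exact ⟨S, hSX, T, hTYS.trans sdiff_subset, hS, hT, disjoint_sdiff.mono_right hTYS⟩
  -- Take `S` inside `X \ Y` if it is large enough, and otherwise let `S` swallow all of `X \ Y`.
  rcases le_total m₁ #(X \ Y) with h | h
  · obtain ⟨S, hS, hcard⟩ := exists_subset_card_eq h
    have hYS : Disjoint Y S := (sdiff_disjoint.mono_left hS).symm
    exact ⟨S, hS.trans sdiff_subset, hcard, by rwa [sdiff_eq_self_of_disjoint hYS]⟩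
  · obtain ⟨S, hXYS, hSX, hcard⟩ := exists_subsuperset_card_eq sdiff_subset h hX
    refine ⟨S, hSX, hcard, ?_⟩
    have hsub : (X ∪ Y) \ S ⊆ Y \ S := by
      intro x hx
      simp only [mem_sdiff, mem_union] at hx ⊢
      refine ⟨?_, hx.2⟩
      by_contra hxY
      exact hx.2 (hXYS (mem_sdiff.2 ⟨hx.1.resolve_right hxY, hxY⟩))
    calc m₂ ≤ #(X ∪ Y) - #S := by omega
      _ ≤ #((X ∪ Y) \ S) := le_card_sdiff _ _
      _ ≤ #(Y \ S) := card_le_card hsub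

theorem SimpleGraph.contains_doubleStar {V : Type*} {G : SimpleGraph V} {v w : V}
    (hvw : G.Adj v w) {S T : Finset V} (hS : ∀ x ∈ S, G.Adj v x) (hT : ∀ x ∈ T, G.Adj w x)
    (hwS : w ∉ S) (hvT : v ∉ T) (hST : Disjoint S T) :
    Contains G (DoubleStar S.card T.card) := by
  set L := v :: w :: (S.toList ++ T.toList)
  have hlen : L.length = S.card + T.card + 2 := by simp [L]
  have hnodup : L.Nodup := by
    have hvS : v ∉ S := fun h => G.loopless.irrefl v (hS v h)
    have hwT : w ∉ T := fun h => G.loopless.irrefl w (hT w h)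
    simpa [L, List.nodup_append, hvS, hwS, hvT, hwT, hvw.ne, S.nodup_toList, T.nodup_toList]
      using Finset.disjoint_left.mp hST
  -- Listing `v`, `w`, then `S`, then `T` follows the labelling of the vertices of `DoubleStar`.
  let f : Fin (S.card + T.card + 2) → V := fun i => L[i.val]
  have hf_injective : Function.Injective f := fun i j hij =>
    Fin.ext (hnodup.getElem_inj_iff.mp hij)
  have hf_zero : ∀ i, i.val = 0 → f i = v := by
    intro i hi
    simp [f, hi, L]
  have hf_one : ∀ i, i.val = 1 → f i = w := by
    intro i hi
    simp [f, hi, L]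
  have hf_mem_S : ∀ i, 2 ≤ i.val → i.val < S.card + 2 → f i ∈ S := by
    intro i hi₁ hi₂
    obtain ⟨j, hj⟩ : ∃ j, i.val = j + 2 := ⟨i.val - 2, by omega⟩
    simp only [f, L, hj, List.getElem_cons_succ,
      List.getElem_append_left (as := S.toList) (show j < S.toList.length by simp; omega)]
    exact mem_toList.mp (List.getElem_mem _)
  have hf_mem_T : ∀ i, S.card + 2 ≤ i.val → f i ∈ T := by
    intro i hi
    obtain ⟨j, hj⟩ : ∃ j, i.val = j + 2 := ⟨i.val - 2, by omega⟩
    simp only [f, L, hj, List.getElem_cons_succ,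
      List.getElem_append_right (as := S.toList) (show S.toList.length ≤ j by simp; omega)]
    exact mem_toList.mp (List.getElem_mem _)
  have hf_adj : ∀ i j : Fin (S.card + T.card + 2),
      (i.val = 0 ∧ 0 < j.val ∧ j.val < S.card + 2) ∨ (i.val = 1 ∧ S.card + 2 ≤ j.val) →
      G.Adj (f i) (f j) := by
    rintro i j (⟨hi, hj₁, hj₂⟩ | ⟨hi, hj⟩)
    · rw [hf_zero i hi]
      rcases (show j.val = 1 ∨ 2 ≤ j.val by omega) with hj | hj
      · rwa [hf_one j hj]
      · exact hS _ (hf_mem_S j hj hj₂)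
    · rw [hf_one i hi]
      exact hT _ (hf_mem_T j hj)
  refine ⟨⟨f, fun {i j} hij => ?_⟩, hf_injective⟩
  obtain ⟨-, hij | hji⟩ := fromRel_adj _ _ _ |>.mp hij
  exacts [hf_adj i j hij, (hf_adj j i hji).symm]

theorem stmt_2 {V : Type*} [Fintype V] [DecidableEq V]
    (m₁ m₂ : ℕ) (G : SimpleGraph V) [DecidableRel G.Adj]
    (v w : V) (hvw : G.Adj v w)
    (hv : m₁ < G.degree v) (hw : m₂ < G.degree w)
    (hunion : m₁ + m₂ + 2 ≤ (G.neighborFinset v ∪ G.neighborFinset w).card) :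
    Contains G (DoubleStar m₁ m₂) := by
  set X := (G.neighborFinset v).erase w
  set Y := (G.neighborFinset w).erase v
  have hX : m₁ ≤ #X := by
    rw [card_erase_of_mem (by simpa using hvw), card_neighborFinset_eq_degree]; omega
  have hY : m₂ ≤ #Y := by
    rw [card_erase_of_mem (by simpa using hvw.symm), card_neighborFinset_eq_degree]; omega
  have hXY : m₁ + m₂ ≤ #(X ∪ Y) :=
    calc m₁ + m₂ ≤ #(G.neighborFinset v ∪ G.neighborFinset w) - #{v, w} := by
          have := card_le_two (a := v) (b := w); omega
      _ ≤ #((G.neighborFinset v ∪ G.neighborFinset w) \ {v, w}) := le_card_sdiff _ _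
      _ ≤ #(X ∪ Y) := card_le_card fun x => by simp [X, Y]; tauto
  obtain ⟨S, hSX, T, hTY, rfl, rfl, hST⟩ := exists_disjoint_subsets_card_eq hX hY hXY
  exact contains_doubleStar hvw
    (fun x hx => (mem_neighborFinset G v x).mp (mem_of_mem_erase (hSX hx)))
    (fun x hx => (mem_neighborFinset G w x).mp (mem_of_mem_erase (hTY hx)))
    (fun h => ne_of_mem_erase (hSX h) rfl) (fun h => ne_of_mem_erase (hTY h) rfl) hST
end

section
/- Let m₁, m₂ be natural numbers and let G be a graph on n ≥ m₁ + m₂ + 2 vertices containing no copy of the double star S(m₁, m₂). Let v be a vertex of G and let A ⊆ N(v) be a set of neighbours of v with |A| > m₁ such that every vertex u ∈ A has deg(u) > m₂. Then every vertex w ∈ A has at most m₁ + m₂ − |A| neighbours in V(G) \ (A ∪ {v}). -/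
open SimpleGraph

/-!
Suppose `w` had more than `m₁ + m₂ - |A|` neighbours outside `A ∪ {v}`. Then `X = A \ {w}` and
`Y = N(w) \ {v}` satisfy `|X| ≥ m₁`, `|Y| ≥ m₂` and `|X ∪ Y| ≥ m₁ + m₂`, which is exactly what is
needed to pick disjoint `L₁ ⊆ X` and `L₂ ⊆ Y` of sizes `m₁` and `m₂` (fill `L₁` from `X \ Y`
first). The edge `vw` with leaves `L₁` at `v` and `L₂` at `w` is then a copy of `S(m₁, m₂)`.
-/

theorem Finset.card_erase_add_card_sdiff_insert_le {α : Type*} [DecidableEq α]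
    (A N : Finset α) (v w : α) :
    (A.erase w).card + (N \ insert v A).card ≤ (A.erase w ∪ N.erase v).card := by
  have hsub : N \ insert v A ⊆ N.erase v := fun x hx => by
    simp only [Finset.mem_sdiff, Finset.mem_insert, not_or] at hx
    exact Finset.mem_erase.2 ⟨hx.2.1, hx.1⟩
  have hdisj : Disjoint (A.erase w) (N \ insert v A) := Finset.disjoint_left.2 fun x hxA hxN =>
    (Finset.mem_sdiff.1 hxN).2 (Finset.mem_insert_of_mem (Finset.mem_of_mem_erase hxA))
  rw [← Finset.card_union_of_disjoint hdisj]
  exact Finset.card_le_card (Finset.union_subset_union_right hsub)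

theorem Finset.exists_disjoint_subsets_card_eq_s3 {α : Type*} [DecidableEq α] {X Y : Finset α}
    {m₁ m₂ : ℕ} (h₁ : m₁ ≤ X.card) (h₂ : m₂ ≤ Y.card) (h : m₁ + m₂ ≤ (X ∪ Y).card) :
    ∃ L₁ ⊆ X, ∃ L₂ ⊆ Y, Disjoint L₁ L₂ ∧ L₁.card = m₁ ∧ L₂.card = m₂ := by
  obtain ⟨L₁, hL₁X, hL₁card, hY⟩ : ∃ L₁ ⊆ X, L₁.card = m₁ ∧ m₂ ≤ (Y \ L₁).card := by
    by_cases hXY : m₁ ≤ (X \ Y).card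
    · obtain ⟨L₁, hL₁, hcard⟩ := Finset.exists_subset_card_eq hXY
      have hdisj : Disjoint Y L₁ :=
        Finset.disjoint_of_subset_right hL₁ Finset.disjoint_sdiff
      exact ⟨L₁, hL₁.trans Finset.sdiff_subset, hcard, by
        rwa [Finset.sdiff_eq_self_of_disjoint hdisj]⟩
    · obtain ⟨L₁, hXYL₁, hL₁X, hcard⟩ :=
        Finset.exists_subsuperset_card_eq (Finset.sdiff_subset (t := Y)) (by omega) h₁
      have hunion : X ∪ Y ⊆ Y ∪ L₁ := by
        intro x hx
        by_cases hxY : x ∈ Y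
        · exact Finset.mem_union_left _ hxY
        · exact Finset.mem_union_right _
            (hXYL₁ (Finset.mem_sdiff.2 ⟨(Finset.mem_union.1 hx).resolve_right hxY, hxY⟩))
      have := Finset.card_le_card hunion
      have := Finset.card_sdiff_add_card Y L₁
      exact ⟨L₁, hL₁X, hcard, by omega⟩
  obtain ⟨L₂, hL₂, hL₂card⟩ := Finset.exists_subset_card_eq hY
  exact ⟨L₁, hL₁X, L₂, hL₂.trans Finset.sdiff_subset,
    Finset.disjoint_of_subset_right hL₂ Finset.disjoint_sdiff, hL₁card, hL₂card⟩

theorem contains_doubleStar_of_nodup {V : Type*} {G : SimpleGraph V} {m₁ m₂ : ℕ} {v w : V}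
    {l₁ l₂ : List V} (hl₁ : l₁.length = m₁) (hl₂ : l₂.length = m₂)
    (hnodup : (v :: w :: (l₁ ++ l₂)).Nodup) (hv : ∀ x ∈ w :: l₁, G.Adj v x)
    (hw : ∀ y ∈ l₂, G.Adj w y) : Contains G (DoubleStar m₁ m₂) := by
  set l := v :: (w :: l₁ ++ l₂)
  have hlen : l.length = m₁ + m₂ + 2 := by simp [l, hl₁, hl₂]
  have hadj : ∀ i j : Fin (m₁ + m₂ + 2),
      (i.val = 0 ∧ 0 < j.val ∧ j.val < m₁ + 2) ∨ (i.val = 1 ∧ m₁ + 2 ≤ j.val) →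
      G.Adj l[i.val] l[j.val] := by
    rintro ⟨i, hi⟩ ⟨j, hj⟩ (⟨rfl, hj0, hjm⟩ | ⟨rfl, hjm⟩)
    · obtain ⟨k, rfl⟩ : ∃ k, j = k + 1 := ⟨j - 1, by simp only at hj0; omega⟩
      simp only [l, List.getElem_cons_zero, List.getElem_cons_succ]
      rw [List.getElem_append_left (by simp only [List.length_cons] at *; omega)]
      exact hv _ (List.getElem_mem _)
    · obtain ⟨k, rfl⟩ : ∃ k, j = k + 2 := ⟨j - 2, by simp only at hjm; omega⟩
      simp only [l, List.cons_append, List.getElem_cons_zero, List.getElem_cons_succ]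
      rw [List.getElem_append_right (by simp only at hjm; omega)]
      exact hw _ (List.getElem_mem _)
  refine ⟨⟨fun i => l[i.val], ?_⟩, fun i j h => Fin.ext (hnodup.getElem_inj_iff.1 h)⟩
  intro i j hij
  obtain ⟨-, h | h⟩ := (fromRel_adj _ _ _).1 hij
  · exact hadj i j h
  · exact (hadj j i h).symm

theorem contains_doubleStar_of_disjoint {V : Type*} {G : SimpleGraph V} {v w : V}
    {L₁ L₂ : Finset V} (hvw : G.Adj v w) (hv : ∀ x ∈ L₁, G.Adj v x) (hw : ∀ y ∈ L₂, G.Adj w y)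
    (hwL₁ : w ∉ L₁) (hvL₂ : v ∉ L₂) (hdisj : Disjoint L₁ L₂) :
    Contains G (DoubleStar L₁.card L₂.card) := by
  have hvL₁ : v ∉ L₁ := fun h => G.irrefl (hv v h)
  have hwL₂ : w ∉ L₂ := fun h => G.irrefl (hw w h)
  refine contains_doubleStar_of_nodup (v := v) (w := w) L₁.length_toList L₂.length_toList ?_ ?_ ?_
  · simp [List.nodup_append, hvw.ne, hvL₁, hvL₂, hwL₁, hwL₂, Finset.nodup_toList]
    exact fun x hx => Finset.disjoint_left.1 hdisj hx
  · simpa [hvw] using hv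
  · simpa using hw

theorem stmt_3_general {V : Type*} [Fintype V] [DecidableEq V]
    (m₁ m₂ : ℕ) (G : SimpleGraph V) [DecidableRel G.Adj]
    (hG : ¬ Contains G (DoubleStar m₁ m₂))
    (v : V) (A : Finset V) (hA : A ⊆ G.neighborFinset v) (hAcard : m₁ < A.card)
    (hdeg : ∀ u ∈ A, m₂ < G.degree u)
    (w : V) (hw : w ∈ A) :
    ((G.neighborFinset w \ insert v A).card : ℤ) ≤ m₁ + m₂ - A.card := by
  by_contra! hcon
  have hvw : G.Adj v w := (mem_neighborFinset _ _ _).1 (hA hw)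
  have hX : m₁ ≤ (A.erase w).card := by
    rw [Finset.card_erase_of_mem hw]; omega
  have hY : m₂ ≤ ((G.neighborFinset w).erase v).card := by
    rw [Finset.card_erase_of_mem ((mem_neighborFinset _ _ _).2 hvw.symm),
      card_neighborFinset_eq_degree]
    have := hdeg w hw
    omega
  have hXY : m₁ + m₂ ≤ (A.erase w ∪ (G.neighborFinset w).erase v).card := by
    have := Finset.card_erase_add_card_sdiff_insert_le A (G.neighborFinset w) v w
    rw [Finset.card_erase_of_mem hw] at this
    omega
  obtain ⟨L₁, hL₁, L₂, hL₂, hdisj, rfl, rfl⟩ := Finset.exists_disjoint_subsets_card_eq_s3 hX hY hXY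
  refine hG (contains_doubleStar_of_disjoint hvw ?_ ?_ ?_ ?_ hdisj)
  · exact fun x hx => (mem_neighborFinset _ _ _).1 (hA (Finset.mem_of_mem_erase (hL₁ hx)))
  · exact fun y hy => (mem_neighborFinset _ _ _).1 (Finset.mem_of_mem_erase (hL₂ hy))
  · exact fun h => Finset.notMem_erase w A (hL₁ h)
  · exact fun h => Finset.notMem_erase v _ (hL₂ h)

theorem stmt_3 {V : Type*} [Fintype V] [DecidableEq V]
    (m₁ m₂ : ℕ) (G : SimpleGraph V) [DecidableRel G.Adj]
    (hn : m₁ + m₂ + 2 ≤ Fintype.card V)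
    (hG : ¬ Contains G (DoubleStar m₁ m₂))
    (v : V) (A : Finset V) (hA : A ⊆ G.neighborFinset v) (hAcard : m₁ < A.card)
    (hdeg : ∀ u ∈ A, m₂ < G.degree u)
    (w : V) (hw : w ∈ A) :
    ((G.neighborFinset w \ insert v A).card : ℤ) ≤ m₁ + m₂ - A.card :=
  stmt_3_general m₁ m₂ G hG v A hA hAcard hdeg w hw
end

section
/- Let m₁, m₂ be natural numbers and let G be a graph on n ≥ m₁ + m₂ + 2 vertices containing no copy of the double star S(m₁, m₂). Let v be a vertex of G and let A ⊆ N(v) be a set of neighbours of v with |A| > m₁ such that every vertex u ∈ A has deg(u) > m₂. Then there exists a vertex z ∈ V(G) \ (A ∪ {v}) having at most ((m₁ + m₂ − |A|)/(n − |A| − 1))·|A| neighbours in A. -/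
open SimpleGraph

lemma contains_doubleStar {V : Type*} [DecidableEq V] (G : SimpleGraph V)
    (m₁ m₂ : ℕ) (v u : V) (huv : G.Adj v u) (L₁ L₂ : Finset V)
    (h₁ : L₁.card = m₁) (h₂ : L₂.card = m₂)
    (hL₁ : ∀ x ∈ L₁, G.Adj v x) (hL₂ : ∀ x ∈ L₂, G.Adj u x)
    (hdisj : Disjoint L₁ L₂)
    (hv₁ : v ∉ L₁) (hv₂ : v ∉ L₂) (hu₁ : u ∉ L₁) (hu₂ : u ∉ L₂) :
    Contains G (DoubleStar m₁ m₂) := by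
  subst h₁ h₂
  set c := L₁.card with hc
  set d := L₂.card with hd
  let l₁ : Fin c → V := fun k => (L₁.equivFin.symm k : V)
  let l₂ : Fin d → V := fun k => (L₂.equivFin.symm k : V)
  have hl₁mem : ∀ k, l₁ k ∈ L₁ := fun k => (L₁.equivFin.symm k).2
  have hl₂mem : ∀ k, l₂ k ∈ L₂ := fun k => (L₂.equivFin.symm k).2
  have hl₁inj : Function.Injective l₁ := fun a b h =>
    L₁.equivFin.symm.injective (Subtype.ext h)
  have hl₂inj : Function.Injective l₂ := fun a b h =>
    L₂.equivFin.symm.injective (Subtype.ext h)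
  let f : Fin (c + d + 2) → V := fun i =>
    if h0 : i.val = 0 then v
    else if h1 : i.val = 1 then u
    else if h2 : i.val < c + 2 then l₁ ⟨i.val - 2, by omega⟩
    else l₂ ⟨i.val - (c + 2), by have := i.isLt; omega⟩
  have e0 : ∀ i : Fin (c + d + 2), i.val = 0 → f i = v := by
    intro i h; simp only [f]; rw [dif_pos h]
  have e1 : ∀ i : Fin (c + d + 2), i.val = 1 → f i = u := by
    intro i h; simp only [f]; rw [dif_neg (by omega), dif_pos h]
  have eL : ∀ i : Fin (c + d + 2), ∀ (h : 2 ≤ i.val) (h' : i.val < c + 2),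
      f i = l₁ ⟨i.val - 2, by omega⟩ := by
    intro i h h'; simp only [f]; rw [dif_neg (by omega), dif_neg (by omega), dif_pos h']
  have eR : ∀ i : Fin (c + d + 2), ∀ (h : c + 2 ≤ i.val),
      f i = l₂ ⟨i.val - (c + 2), by have := i.isLt; omega⟩ := by
    intro i h; simp only [f]
    rw [dif_neg (by omega), dif_neg (by omega), dif_neg (by omega)]
  have key : ∀ i j : Fin (c + d + 2),
      ((i.val = 0 ∧ 0 < j.val ∧ j.val < c + 2) ∨ (i.val = 1 ∧ c + 2 ≤ j.val)) →
      G.Adj (f i) (f j) := by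
    rintro i j (⟨hi0, hj1, hj2⟩ | ⟨hi1, hj⟩)
    · rw [e0 i hi0]
      by_cases hj' : j.val = 1
      · rw [e1 j hj']; exact huv
      · rw [eL j (by omega) hj2]; exact hL₁ _ (hl₁mem _)
    · rw [e1 i hi1, eR j hj]; exact hL₂ _ (hl₂mem _)
  have hadj : ∀ i j, (DoubleStar c d).Adj i j → G.Adj (f i) (f j) := by
    intro i j h
    rw [DoubleStar, SimpleGraph.fromRel_adj] at h
    obtain ⟨-, h | h⟩ := h
    · exact key i j h
    · exact (key j i h).symm
  have hvu : v ≠ u := huv.ne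
  have hinj : Function.Injective f := by
    intro i j hfe
    have hi4 : i.val = 0 ∨ i.val = 1 ∨ (2 ≤ i.val ∧ i.val < c + 2) ∨ c + 2 ≤ i.val := by omega
    have hj4 : j.val = 0 ∨ j.val = 1 ∨ (2 ≤ j.val ∧ j.val < c + 2) ∨ c + 2 ≤ j.val := by omega
    rcases hi4 with hi | hi | ⟨hi, hi'⟩ | hi <;>
      rcases hj4 with hj | hj | ⟨hj, hj'⟩ | hj
    · exact Fin.ext (by omega)
    · rw [e0 i hi, e1 j hj] at hfe; exact absurd hfe hvu
    · rw [e0 i hi, eL j hj hj'] at hfe; exact absurd (hfe ▸ hl₁mem _) hv₁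
    · rw [e0 i hi, eR j hj] at hfe; exact absurd (hfe ▸ hl₂mem _) hv₂
    · rw [e1 i hi, e0 j hj] at hfe; exact absurd hfe.symm hvu
    · exact Fin.ext (by omega)
    · rw [e1 i hi, eL j hj hj'] at hfe; exact absurd (hfe ▸ hl₁mem _) hu₁
    · rw [e1 i hi, eR j hj] at hfe; exact absurd (hfe ▸ hl₂mem _) hu₂
    · rw [eL i hi hi', e0 j hj] at hfe; exact absurd (hfe ▸ hl₁mem _) hv₁
    · rw [eL i hi hi', e1 j hj] at hfe; exact absurd (hfe ▸ hl₁mem _) hu₁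
    · rw [eL i hi hi', eL j hj hj'] at hfe
      have := hl₁inj hfe
      have := Fin.mk.inj_iff.mp this
      exact Fin.ext (by omega)
    · rw [eL i hi hi', eR j hj] at hfe
      exact absurd (hl₂mem _) (Finset.disjoint_left.mp hdisj (hfe ▸ hl₁mem _))
    · rw [eR i hi, e0 j hj] at hfe; exact absurd (hfe ▸ hl₂mem _) hv₂
    · rw [eR i hi, e1 j hj] at hfe; exact absurd (hfe ▸ hl₂mem _) hu₂
    · rw [eR i hi, eL j hj hj'] at hfe
      exact absurd (hl₁mem _) (Finset.disjoint_right.mp hdisj (hfe ▸ hl₂mem _))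
    · rw [eR i hi, eR j hj] at hfe
      have := hl₂inj hfe
      have := Fin.mk.inj_iff.mp this
      exact Fin.ext (by omega)
  exact ⟨⟨f, fun h => hadj _ _ h⟩, hinj⟩

open Finset in
theorem stmt_4 {V : Type*} [Fintype V] [DecidableEq V]
    (m₁ m₂ : ℕ) (G : SimpleGraph V) [DecidableRel G.Adj]
    (hn : m₁ + m₂ + 2 ≤ Fintype.card V)
    (hG : ¬ Contains G (DoubleStar m₁ m₂))
    (v : V) (A : Finset V) (hA : A ⊆ G.neighborFinset v) (hAcard : m₁ < A.card)
    (hdeg : ∀ u ∈ A, m₂ < G.degree u) :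
    ∃ z : V, z ∉ A ∧ z ≠ v ∧
      ((G.neighborFinset z ∩ A).card : ℝ) ≤
        (m₁ + m₂ - A.card) / (Fintype.card V - A.card - 1) * A.card := by
  classical
  set n := Fintype.card V with hn'
  set a := A.card with ha'
  set B : Finset V := Finset.univ \ insert v A with hB'
  have hvA : v ∉ A := fun h => G.irrefl ((mem_neighborFinset _ _ _).mp (hA h))
  have hBcard : B.card = n - a - 1 := by
    rw [hB', card_sdiff_of_subset (subset_univ _), card_insert_of_notMem hvA, card_univ]
    omega
  have hBA : ∀ x ∈ B, x ∉ A ∧ x ≠ v := by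
    intro x hx
    rw [hB', mem_sdiff, mem_insert] at hx
    push_neg at hx
    exact ⟨hx.2.2, hx.2.1⟩
  -- Step 1: key bound
  have key : ∀ u ∈ A, (G.neighborFinset u ∩ B).card + a ≤ m₁ + m₂ := by
    intro u hu
    by_contra hcon
    push_neg at hcon
    set C : Finset V := G.neighborFinset u ∩ B with hC'
    set D : Finset V := G.neighborFinset u ∩ A with hD'
    set t := C.card with ht'
    have huv : G.Adj v u := (mem_neighborFinset _ _ _).mp (hA hu)
    have hCD : Disjoint C D := by
      apply Finset.disjoint_left.mpr
      intro x hx hx'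
      exact (hBA x (mem_inter.mp hx).2).1 (mem_inter.mp hx').2
    have hsub : G.neighborFinset u \ {v} ⊆ C ∪ D := by
      intro x hx
      rw [mem_sdiff, mem_singleton] at hx
      rw [mem_union, hC', hD', mem_inter, mem_inter]
      by_cases hxA : x ∈ A
      · exact Or.inr ⟨hx.1, hxA⟩
      · refine Or.inl ⟨hx.1, ?_⟩
        rw [hB', mem_sdiff, mem_insert]
        exact ⟨mem_univ _, fun h => h.elim hx.2 hxA⟩
    have hcd : m₂ ≤ t + D.card := by
      have h1 : (G.neighborFinset u).card ≤ (G.neighborFinset u \ {v}).card + 1 := by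
        have := Finset.card_le_card_sdiff_add_card (s := G.neighborFinset u) (t := {v})
        simpa using this
      have h2 : (G.neighborFinset u \ {v}).card ≤ (C ∪ D).card := card_le_card hsub
      have h3 : (C ∪ D).card = t + D.card := card_union_of_disjoint hCD
      have h4 : m₂ < (G.neighborFinset u).card := hdeg u hu
      omega
    obtain ⟨C', hC'sub, hC'card⟩ := Finset.exists_subset_card_eq
      (show min m₂ t ≤ C.card by omega)
    obtain ⟨E, hEsub, hEcard⟩ := Finset.exists_subset_card_eq
      (show m₂ - t ≤ D.card by omega)
    have hC'E : Disjoint C' E :=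
      Finset.disjoint_left.mpr fun x hx hx' =>
        Finset.disjoint_left.mp hCD (hC'sub hx) (hEsub hx')
    have hL₂card : (C' ∪ E).card = m₂ := by
      rw [card_union_of_disjoint hC'E, hC'card, hEcard]; omega
    have hAEcard : m₁ ≤ (A \ insert u E).card := by
      have h1 : A.card ≤ (A \ insert u E).card + (insert u E).card :=
        Finset.card_le_card_sdiff_add_card
      have h2 : (insert u E).card ≤ E.card + 1 := card_insert_le _ _
      omega
    obtain ⟨L₁, hL₁sub, hL₁card⟩ := Finset.exists_subset_card_eq hAEcard
    have hL₁A : ∀ x ∈ L₁, x ∈ A := fun x hx => (mem_sdiff.mp (hL₁sub hx)).1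
    have hL₁nE : ∀ x ∈ L₁, x ∉ insert u E := fun x hx => (mem_sdiff.mp (hL₁sub hx)).2
    refine hG (contains_doubleStar G m₁ m₂ v u huv L₁ (C' ∪ E) hL₁card hL₂card
      ?_ ?_ ?_ ?_ ?_ ?_ ?_)
    · exact fun x hx => (mem_neighborFinset _ _ _).mp (hA (hL₁A x hx))
    · intro x hx
      rcases mem_union.mp hx with h | h
      · exact (mem_neighborFinset _ _ _).mp (mem_inter.mp (hC'sub h)).1
      · exact (mem_neighborFinset _ _ _).mp (mem_inter.mp (hEsub h)).1
    · refine Finset.disjoint_left.mpr fun x hx hx' => ?_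
      rcases mem_union.mp hx' with h | h
      · exact (hBA x (mem_inter.mp (hC'sub h)).2).1 (hL₁A x hx)
      · exact hL₁nE x hx (mem_insert_of_mem h)
    · exact fun h => hvA (hL₁A v h)
    · intro h
      rcases mem_union.mp h with h | h
      · exact (hBA v (mem_inter.mp (hC'sub h)).2).2 rfl
      · exact hvA (mem_inter.mp (hEsub h)).2
    · exact fun h => hL₁nE u h (mem_insert_self _ _)
    · intro h
      rcases mem_union.mp h with h | h
      · exact G.irrefl ((mem_neighborFinset _ _ _).mp (mem_inter.mp (hC'sub h)).1)
      · exact G.irrefl ((mem_neighborFinset _ _ _).mp (mem_inter.mp (hEsub h)).1)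
  -- facts
  obtain ⟨u₀, hu₀⟩ := Finset.card_pos.mp (show 0 < A.card by omega)
  have ham : a ≤ m₁ + m₂ := le_trans (Nat.le_add_left _ _) (key u₀ hu₀)
  have hnn : a + 2 ≤ n := by omega
  -- Step 2: double counting
  have hdc : ∑ z ∈ B, (G.neighborFinset z ∩ A).card
      = ∑ u ∈ A, (G.neighborFinset u ∩ B).card := by
    have h1 : ∀ (z : V) (s : Finset V),
        (G.neighborFinset z ∩ s).card = ∑ x ∈ s, if G.Adj z x then 1 else 0 := by
      intro z s
      rw [← Finset.card_filter]
      congr 1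
      ext x
      simp [Finset.mem_inter, Finset.mem_filter, SimpleGraph.mem_neighborFinset, and_comm]
    simp only [h1]
    rw [Finset.sum_comm]
    refine Finset.sum_congr rfl fun u _ => Finset.sum_congr rfl fun z _ => ?_
    simp [SimpleGraph.adj_comm]
  have hsumle : ∑ z ∈ B, (G.neighborFinset z ∩ A).card ≤ (m₁ + m₂ - a) * a := by
    rw [hdc]
    calc ∑ u ∈ A, (G.neighborFinset u ∩ B).card
        ≤ ∑ u ∈ A, (m₁ + m₂ - a) := Finset.sum_le_sum fun u hu => by
          have := key u hu; omega
      _ = (m₁ + m₂ - a) * a := by rw [Finset.sum_const, smul_eq_mul, mul_comm]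
  have hBne : B.Nonempty := Finset.card_pos.mp (by omega)
  obtain ⟨z, hzB, hzmin⟩ := B.exists_min_image (fun z => (G.neighborFinset z ∩ A).card) hBne
  have hmin : B.card * (G.neighborFinset z ∩ A).card ≤ (m₁ + m₂ - a) * a := by
    calc B.card * (G.neighborFinset z ∩ A).card
        = B.card • (G.neighborFinset z ∩ A).card := by rw [smul_eq_mul]
      _ ≤ ∑ w ∈ B, (G.neighborFinset w ∩ A).card :=
          Finset.card_nsmul_le_sum B _ _ fun w hw => hzmin w hw
      _ ≤ (m₁ + m₂ - a) * a := hsumle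
  refine ⟨z, (hBA z hzB).1, (hBA z hzB).2, ?_⟩
  have hpos : (0 : ℝ) < (n : ℝ) - a - 1 := by
    have : (a : ℝ) + 2 ≤ n := by exact_mod_cast hnn
    linarith
  rw [div_mul_eq_mul_div, le_div_iff₀ hpos]
  have hcast : ((n - a - 1 : ℕ) : ℝ) = (n : ℝ) - a - 1 := by
    push_cast [Nat.sub_sub]
    rw [Nat.cast_sub (by omega)]
    push_cast
    ring
  have hcast2 : ((m₁ + m₂ - a : ℕ) : ℝ) = (m₁ : ℝ) + m₂ - a := by
    rw [Nat.cast_sub ham]; push_cast; ring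
  have : ((B.card * (G.neighborFinset z ∩ A).card : ℕ) : ℝ)
      ≤ (((m₁ + m₂ - a) * a : ℕ) : ℝ) := by exact_mod_cast hmin
  rw [Nat.cast_mul, Nat.cast_mul, hBcard, hcast, hcast2] at this
  nlinarith [this]
end

section
/- Let m₁, m₂ be natural numbers, let n ≥ max{2m₁, m₁ + 2m₂} + 2, and suppose the edges of the complete graph K_n are coloured with red and blue such that there is no monochromatic copy of the double star S(m₁, m₂). Then there is a colour C ∈ {red, blue} such that every vertex of K_n is incident to at most m₁ edges of colour C. -/
open SimpleGraph

/-!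
If an edge `xy` of one colour has `deg x > m₁`, `deg y > m₂` and
`|N(x) ∪ N(y)| ≥ m₁ + m₂ + 2`, the leaves of a double star with centres `x` and `y` can be chosen
in `N(x) ∪ N(y)`. So along such an edge, `y` has at most `m₁ + m₂ - deg x` neighbours of that
colour outside `N(x) ∪ {x}`. This first bounds every degree by `m₁ + m₂`, hence every vertex has
degree larger than `m₂` in both colours.

Counting the edges between the red and the blue neighbourhood of a vertex shows that no vertex
has more than `m₁` neighbours in both colours. So if the theorem failed, the vertices would split
into two nonempty classes: `S`, of red degree `> m₁`, and `T`, of blue degree `> m₁`. Counting the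
blue–red paths `x – v – y` with `x ∈ S`, `y ∈ T` against the bound above and applying
Cauchy–Schwarz gives `3n ≤ 4(m₁ + m₂ + 1)`, contradicting the lower bound on `n`.
-/

open Finset

lemma Finset.exists_subset_subset_disjoint_card_eq {α : Type*} [DecidableEq α]
    {A B : Finset α} {m₁ m₂ : ℕ} (hA : m₁ ≤ #A) (hB : m₂ ≤ #B) (hAB : m₁ + m₂ ≤ #(A ∪ B)) :
    ∃ S₁ ⊆ A, ∃ S₂ ⊆ B, #S₁ = m₁ ∧ #S₂ = m₂ ∧ Disjoint S₁ S₂ := by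
  obtain ⟨S₁, hS₁A, hS₁, hm₂⟩ : ∃ S₁ ⊆ A, #S₁ = m₁ ∧ m₂ ≤ #(B \ S₁) := by
    by_cases h : m₁ ≤ #(A \ B)
    · obtain ⟨S₁, hS₁, rfl⟩ := exists_subset_card_eq h
      refine ⟨S₁, hS₁.trans sdiff_subset, rfl, ?_⟩
      rwa [sdiff_eq_self_of_disjoint (disjoint_sdiff_self_left.mono_left hS₁).symm]
    · obtain ⟨S₁, hsub, hS₁, rfl⟩ :=
        exists_subsuperset_card_eq (sdiff_subset : A \ B ⊆ A) (by omega) hA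
      refine ⟨S₁, hS₁, rfl, ?_⟩
      have hunion : B ∪ S₁ = A ∪ B := by
        refine Subset.antisymm (union_subset subset_union_right (hS₁.trans subset_union_left)) ?_
        rw [union_comm, ← union_sdiff_self_eq_union]
        exact union_subset_union_right hsub
      have := card_sdiff_add_card B S₁
      rw [hunion] at this
      omega
  obtain ⟨S₂, hS₂, rfl⟩ := exists_subset_card_eq hm₂
  exact ⟨S₁, hS₁A, S₂, hS₂.trans sdiff_subset, hS₁, rfl, disjoint_sdiff.mono_right hS₂⟩

lemma three_mul_add_le_of_mul_add_sq_add_sq_le {x y c : ℕ} (hxy : 0 < x + y)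
    (h : x * y + x * x + y * y ≤ c * (x + y)) : 3 * (x + y) ≤ 4 * c := by
  have : 3 * (x + y) * (x + y) ≤ 4 * c * (x + y) := by
    nlinarith [sq_nonneg ((x : ℤ) - y)]
  exact Nat.le_of_mul_le_mul_right this hxy

lemma Finset.three_mul_card_add_card_le {ι : Type*} {s t : Finset ι} {f g : ι → ℕ} {c : ℕ}
    (hs : s.Nonempty) (ht : t.Nonempty) (hfg : ∑ i ∈ s, f i + ∑ i ∈ t, g i = #s * #t)
    (h : ∑ i ∈ s, (#s + f i) * f i + ∑ i ∈ t, (#t + g i) * g i ≤ c * (#s * #t)) :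
    3 * (#s + #t) ≤ 4 * c := by
  have hf := sq_sum_le_card_mul_sum_sq (s := s) (f := f)
  have hg := sq_sum_le_card_mul_sum_sq (s := t) (f := g)
  simp only [add_mul, sum_add_distrib, ← mul_sum, ← sq] at h
  have hpos : 0 < #s * #t * (#s * #t) := by
    have := hs.card_pos
    have := ht.card_pos
    positivity
  refine Nat.le_of_mul_le_mul_right ?_ hpos
  set E := ∑ i ∈ s, f i
  set F := ∑ i ∈ t, g i
  zify at *
  -- Multiplied by `#s * #t`, the claim is a combination of the hypotheses and
  -- `(#s + #t) * (E - F) ^ 2 ≥ 0`, up to the multiple `hR` of `#s * #t = E + F`.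
  have hR : ((#s : ℤ) * #t - E - F) * (#s * (4 * E - 3 * (#s * #t) - 3 * (E + F)) +
      #t * (4 * F - 3 * (#s * #t) - 3 * (E + F))) = 0 := by
    rw [show (#s : ℤ) * #t - E - F = 0 by linarith, zero_mul]
  linarith [mul_nonneg (by positivity : (0 : ℤ) ≤ #s + #t) (sq_nonneg ((E : ℤ) - F)),
    mul_le_mul_of_nonneg_left h (by positivity : (0 : ℤ) ≤ 4 * #s * #t),
    mul_le_mul_of_nonneg_left hf (by positivity : (0 : ℤ) ≤ 4 * #t),
    mul_le_mul_of_nonneg_left hg (by positivity : (0 : ℤ) ≤ 4 * #s)]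

namespace SimpleGraph

variable {V : Type*} {m₁ m₂ : ℕ}

section Counting

variable [Fintype V] [DecidableEq V] (G : SimpleGraph V) [DecidableRel G.Adj]

lemma degree_add_degree_compl (v : V) : G.degree v + Gᶜ.degree v + 1 = Fintype.card V := by
  have := G.degree_lt_card_verts v
  rw [degree_compl]
  omega

lemma card_neighborFinset_inter_add_card_compl_neighborFinset_inter (v : V) (s : Finset V) :
    #(G.neighborFinset v ∩ s) + #(Gᶜ.neighborFinset v ∩ s) = #(s.erase v) := by
  rw [← card_inter_add_card_sdiff (s.erase v) (G.neighborFinset v)]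
  congr 2 <;> ext w <;>
    simp only [mem_inter, mem_erase, mem_sdiff, mem_neighborFinset, compl_adj] <;> grind [Adj.ne]

lemma card_neighborFinset_inter_add_card_neighborFinset_inter_compl (v : V) (s : Finset V) :
    #(G.neighborFinset v ∩ s) + #(G.neighborFinset v ∩ sᶜ) = G.degree v := by
  rw [← card_neighborFinset_eq_degree, ← sdiff_eq_inter_compl, card_inter_add_card_sdiff]

lemma card_neighborFinset_inter_eq_sum (v : V) (s : Finset V) :
    #(G.neighborFinset v ∩ s) = ∑ w ∈ s, if G.Adj v w then 1 else 0 := by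
  rw [sum_boole, Nat.cast_id]
  congr 1
  ext
  simp [and_comm]

lemma sum_sum_card_neighborFinset_inter (H K : SimpleGraph V) [DecidableRel H.Adj]
    [DecidableRel K.Adj] (s t : Finset V) :
    ∑ x ∈ s, ∑ y ∈ t, #(H.neighborFinset x ∩ K.neighborFinset y) =
      ∑ v, #(H.neighborFinset v ∩ s) * #(K.neighborFinset v ∩ t) := by
  have := sum_card_bipartiteAbove_eq_sum_card_bipartiteBelow (s := s ×ˢ t) (t := univ)
    (r := fun p v => H.Adj p.1 v ∧ K.Adj p.2 v)
  simp only [bipartiteAbove, bipartiteBelow, sum_product] at this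
  convert this using 3 with x _ y _ v
  · congr 1; ext; simp
  · rw [← card_product]; congr 1; ext; simp [adj_comm, and_comm, and_assoc, and_left_comm]

lemma sum_sum_ite_adj {s t : Finset V} (hst : Disjoint s t) (f g : V → ℕ) :
    ∑ x ∈ s, ∑ y ∈ t, (if G.Adj x y then f x else g y) =
      ∑ x ∈ s, f x * #(G.neighborFinset x ∩ t) + ∑ y ∈ t, g y * #(Gᶜ.neighborFinset y ∩ s) := by
  simp only [card_neighborFinset_inter_eq_sum, mul_sum, mul_boole]
  rw [sum_comm (s := t), ← sum_add_distrib]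
  refine sum_congr rfl fun x hx => ?_
  rw [← sum_add_distrib]
  refine sum_congr rfl fun y hy => ?_
  have hne : x ≠ y := fun h => Finset.disjoint_left.1 hst hx (h ▸ hy)
  by_cases hxy : G.Adj x y <;> simp [hxy, hne, adj_comm]

lemma sum_card_neighborFinset_inter_add_sum_card_compl_neighborFinset_inter {s t : Finset V}
    (hst : Disjoint s t) :
    ∑ x ∈ s, #(G.neighborFinset x ∩ t) + ∑ y ∈ t, #(Gᶜ.neighborFinset y ∩ s) = #s * #t := by
  simpa using (G.sum_sum_ite_adj hst (fun _ => 1) (fun _ => 1)).symm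

lemma sum_card_mul_card_add_le (s : Finset V) (c : ℕ)
    (h : ∀ x ∈ s, ∀ y ∈ sᶜ, #(Gᶜ.neighborFinset x ∩ G.neighborFinset y) +
      (if G.Adj x y then G.degree x + 1 else Gᶜ.degree y + 1) ≤ c) :
    ∑ x ∈ s, (#s + #(G.neighborFinset x ∩ sᶜ)) * #(G.neighborFinset x ∩ sᶜ) +
      ∑ y ∈ sᶜ, (#sᶜ + #(Gᶜ.neighborFinset y ∩ s)) * #(Gᶜ.neighborFinset y ∩ s) ≤
      c * (#s * #sᶜ) := by
  have hs : ∀ x ∈ s, (#s + #(G.neighborFinset x ∩ sᶜ)) * #(G.neighborFinset x ∩ sᶜ) =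
      #(Gᶜ.neighborFinset x ∩ s) * #(G.neighborFinset x ∩ sᶜ) +
        (G.degree x + 1) * #(G.neighborFinset x ∩ sᶜ) := by
    intro x hx
    have h₁ := G.card_neighborFinset_inter_add_card_compl_neighborFinset_inter x s
    have h₂ := G.card_neighborFinset_inter_add_card_neighborFinset_inter_compl x s
    have h₃ := card_erase_add_one hx
    rw [← h₂, ← h₃, ← h₁]
    ring
  have hsc : ∀ y ∈ sᶜ, (#sᶜ + #(Gᶜ.neighborFinset y ∩ s)) * #(Gᶜ.neighborFinset y ∩ s) =
      #(Gᶜ.neighborFinset y ∩ s) * #(G.neighborFinset y ∩ sᶜ) +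
        (Gᶜ.degree y + 1) * #(Gᶜ.neighborFinset y ∩ s) := by
    intro y hy
    have h₁ := G.card_neighborFinset_inter_add_card_compl_neighborFinset_inter y sᶜ
    have h₂ := Gᶜ.card_neighborFinset_inter_add_card_neighborFinset_inter_compl y s
    have h₃ := card_erase_add_one hy
    rw [← h₂, ← h₃, ← h₁]
    ring
  -- The first sum counts the paths `x – v – y` (`x ∈ s`, `y ∉ s`, `Gᶜ.Adj x v`, `G.Adj v y`)
  -- by their middle vertex `v`.
  calc _ = ∑ v, #(Gᶜ.neighborFinset v ∩ s) * #(G.neighborFinset v ∩ sᶜ) +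
        (∑ x ∈ s, (G.degree x + 1) * #(G.neighborFinset x ∩ sᶜ) +
          ∑ y ∈ sᶜ, (Gᶜ.degree y + 1) * #(Gᶜ.neighborFinset y ∩ s)) := by
        rw [sum_congr rfl hs, sum_congr rfl hsc, sum_add_distrib, sum_add_distrib,
          ← sum_add_sum_compl s]
        ring
    _ = ∑ x ∈ s, ∑ y ∈ sᶜ, (#(Gᶜ.neighborFinset x ∩ G.neighborFinset y) +
          (if G.Adj x y then G.degree x + 1 else Gᶜ.degree y + 1)) := by
        rw [← sum_sum_card_neighborFinset_inter, ← G.sum_sum_ite_adj disjoint_compl_right,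
          ← sum_add_distrib]
        exact sum_congr rfl fun x _ => sum_add_distrib.symm
    _ ≤ ∑ x ∈ s, ∑ y ∈ sᶜ, c := sum_le_sum fun x hx => sum_le_sum fun y hy => h x hx y hy
    _ = c * (#s * #sᶜ) := by simp only [sum_const, smul_eq_mul]; ring

variable {G} in
lemma exists_adj_compl_adj_of_degree_lt {v y : V} (hvy : G.Adj v y)
    (h : G.degree y < G.degree v) : ∃ z, G.Adj v z ∧ Gᶜ.Adj y z := by
  have hcard : #(insert y ((G.neighborFinset y).erase v)) < #(G.neighborFinset v) := by
    have := card_insert_le y ((G.neighborFinset y).erase v)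
    rw [card_erase_of_mem ((mem_neighborFinset _ _ _).2 hvy.symm),
      card_neighborFinset_eq_degree] at this
    rw [card_neighborFinset_eq_degree]
    have := G.degree_pos_iff_exists_adj y |>.2 ⟨v, hvy.symm⟩
    omega
  obtain ⟨z, hz, hzy⟩ := exists_mem_notMem_of_card_lt_card hcard
  rw [mem_neighborFinset] at hz
  simp only [mem_insert, mem_erase, mem_neighborFinset, not_or, not_and] at hzy
  exact ⟨z, hz, (compl_adj _ _ _).2 ⟨Ne.symm hzy.1, hzy.2 hz.ne'⟩⟩

end Counting

variable {G : SimpleGraph V}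

/-- A red/blue colouring of the complete graph on `V` is encoded by its red graph `G`; the blue
graph is `Gᶜ`. -/
structure NoMonochromaticDoubleStar (G : SimpleGraph V) (m₁ m₂ : ℕ) : Prop where
  not_contains : ¬Contains G (DoubleStar m₁ m₂)
  not_contains_compl : ¬Contains Gᶜ (DoubleStar m₁ m₂)

lemma NoMonochromaticDoubleStar.compl (h : NoMonochromaticDoubleStar G m₁ m₂) :
    NoMonochromaticDoubleStar Gᶜ m₁ m₂ :=
  ⟨h.not_contains_compl, by rw [compl_compl]; exact h.not_contains⟩

lemma contains_doubleStar_of_vecCons {x y : V} {f₁ : Fin m₁ → V} {f₂ : Fin m₂ → V}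
    (hxy : G.Adj x y) (hx : ∀ i, G.Adj x (f₁ i)) (hy : ∀ i, G.Adj y (f₂ i))
    (hinj : Function.Injective (Matrix.vecCons x (Matrix.vecCons y (Fin.append f₁ f₂)))) :
    Contains G (DoubleStar m₁ m₂) := by
  refine ⟨⟨_, fun {i j} hij => ?_⟩, hinj⟩
  have key : ∀ i j : Fin (m₁ + m₂ + 2),
      (i.val = 0 ∧ 0 < j.val ∧ j.val < m₁ + 2) ∨ (i.val = 1 ∧ m₁ + 2 ≤ j.val) →
      G.Adj (Matrix.vecCons x (Matrix.vecCons y (Fin.append f₁ f₂)) i)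
        (Matrix.vecCons x (Matrix.vecCons y (Fin.append f₁ f₂)) j) := by
    intro i j h
    induction i using Fin.cases with
    | zero =>
      induction j using Fin.cases with
      | zero => simp at h
      | succ j =>
        induction j using Fin.cases with
        | zero => simpa using hxy
        | succ j =>
          induction j using Fin.addCases with
          | left j => simpa using hx j
          | right j => simp at h
    | succ i =>
      induction i using Fin.cases with
      | zero =>
        induction j using Fin.cases with
        | zero => simp at h
        | succ j =>
          induction j using Fin.cases with
          | zero => simp at h
          | succ j =>
            induction j using Fin.addCases with
            | left j => simp at h; omega
            | right j => simpa using hy j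
      | succ i => simp at h
  obtain ⟨-, h | h⟩ := (fromRel_adj _ _ _).1 hij
  · exact key i j h
  · exact (key j i h).symm

variable [Fintype V] [DecidableEq V] [DecidableRel G.Adj]

lemma contains_doubleStar_of_card_union {x y : V} (hxy : G.Adj x y)
    (hx : m₁ < G.degree x) (hy : m₂ < G.degree y)
    (hcard : m₁ + m₂ + 2 ≤ #(G.neighborFinset x ∪ G.neighborFinset y)) :
    Contains G (DoubleStar m₁ m₂) := by
  set A := (G.neighborFinset x).erase y
  set B := (G.neighborFinset y).erase x
  have hA : m₁ ≤ #A := by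
    rw [card_erase_of_mem ((mem_neighborFinset _ _ _).2 hxy), card_neighborFinset_eq_degree]
    omega
  have hB : m₂ ≤ #B := by
    rw [card_erase_of_mem ((mem_neighborFinset _ _ _).2 hxy.symm), card_neighborFinset_eq_degree]
    omega
  have hAB : m₁ + m₂ ≤ #(A ∪ B) := by
    have hsub : ((G.neighborFinset x ∪ G.neighborFinset y).erase x).erase y ⊆ A ∪ B := by
      intro v
      simp only [A, B, mem_erase, mem_union]
      tauto
    have h₁ := pred_card_le_card_erase (s := G.neighborFinset x ∪ G.neighborFinset y) (a := x)
    have h₂ := pred_card_le_card_erase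
      (s := (G.neighborFinset x ∪ G.neighborFinset y).erase x) (a := y)
    have h₃ := card_le_card hsub
    omega
  obtain ⟨S₁, hS₁, S₂, hS₂, rfl, rfl, hS⟩ := exists_subset_subset_disjoint_card_eq hA hB hAB
  have hf₁ : ∀ i, (S₁.equivFin.symm i : V) ∈ A := fun i => hS₁ (S₁.equivFin.symm i).2
  have hf₂ : ∀ i, (S₂.equivFin.symm i : V) ∈ B := fun i => hS₂ (S₂.equivFin.symm i).2
  simp only [A, B, mem_erase, mem_neighborFinset] at hf₁ hf₂
  refine contains_doubleStar_of_vecCons hxy (fun i => (hf₁ i).2) (fun i => (hf₂ i).2) ?_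
  simp only [Matrix.vecCons]
  rw [Fin.cons_injective_iff, Fin.cons_injective_iff, Fin.append_injective_iff]
  simp only [Fin.range_cons, Set.mem_insert_iff, Set.mem_range, not_or, not_exists]
  refine ⟨⟨hxy.ne, Fin.addCases ?_ ?_⟩, Fin.addCases ?_ ?_, Subtype.val_injective.comp
    S₁.equivFin.symm.injective, Subtype.val_injective.comp S₂.equivFin.symm.injective,
    fun i j h => Finset.disjoint_left.1 hS (S₁.equivFin.symm i).2 (h ▸ (S₂.equivFin.symm j).2)⟩
  · intro i; simpa using (hf₁ i).2.ne'
  · intro i; simpa using (hf₂ i).1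
  · intro i; simpa using (hf₁ i).1
  · intro i; simpa using (hf₂ i).2.ne'

lemma card_neighborFinset_inter_add_degree_le (hG : ¬Contains G (DoubleStar m₁ m₂))
    {H : SimpleGraph V} [DecidableRel H.Adj] (hH : H ≤ Gᶜ) {x y : V} (hxy : G.Adj x y)
    (hx : m₁ < G.degree x) (hy : m₂ < G.degree y) :
    #(H.neighborFinset x ∩ G.neighborFinset y) + G.degree x ≤ m₁ + m₂ := by
  have hsub : insert x (H.neighborFinset x ∩ G.neighborFinset y) ∪ G.neighborFinset x ⊆
      G.neighborFinset x ∪ G.neighborFinset y := by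
    refine union_subset (insert_subset ?_ ?_) subset_union_left
    · exact mem_union_right _ ((mem_neighborFinset _ _ _).2 hxy.symm)
    · exact inter_subset_right.trans subset_union_right
  have hdisj : Disjoint (insert x (H.neighborFinset x ∩ G.neighborFinset y))
      (G.neighborFinset x) := by
    refine disjoint_insert_left.2 ⟨G.notMem_neighborFinset_self x, ?_⟩
    exact (Finset.disjoint_left.2 fun v hv hv' => ((compl_adj _ _ _).1
      (hH ((mem_neighborFinset _ _ _).1 hv))).2 ((mem_neighborFinset _ _ _).1 hv')).mono_left
      inter_subset_left
  have hcard := card_le_card hsub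
  rw [card_union_of_disjoint hdisj, card_insert_of_notMem (fun h => H.notMem_neighborFinset_self x
    (mem_of_mem_inter_left h)), card_neighborFinset_eq_degree] at hcard
  by_contra hlt
  exact hG (contains_doubleStar_of_card_union hxy hx hy (by omega))

namespace NoMonochromaticDoubleStar

lemma degree_le (h : NoMonochromaticDoubleStar G m₁ m₂)
    (hn : m₁ + 2 * m₂ + 2 ≤ Fintype.card V) (v : V) : G.degree v ≤ m₁ + m₂ := by
  by_contra! hv
  have hsmall : ∀ y, G.Adj v y → G.degree y ≤ m₂ := fun y hvy => by
    by_contra! hy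
    have := card_neighborFinset_inter_add_degree_le h.not_contains le_rfl hvy (by omega) hy
    omega
  obtain ⟨y, hvy⟩ := G.degree_pos_iff_exists_adj v |>.1 (by omega)
  have hy := hsmall y hvy
  obtain ⟨z, hvz, hyz⟩ := exists_adj_compl_adj_of_degree_lt hvy (by omega)
  have hz := hsmall z hvz
  have := G.degree_add_degree_compl y
  have := G.degree_add_degree_compl z
  have := card_neighborFinset_inter_add_degree_le h.not_contains_compl le_rfl hyz
    (by omega) (by omega)
  omega

lemma lt_degree (h : NoMonochromaticDoubleStar G m₁ m₂)
    (hn : m₁ + 2 * m₂ + 2 ≤ Fintype.card V) (v : V) : m₂ < G.degree v := by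
  have := h.compl.degree_le hn v
  have := G.degree_add_degree_compl v
  omega


lemma sum_card_inter_add_degree_mul_le (h : NoMonochromaticDoubleStar G m₁ m₂)
    (hn : m₁ + 2 * m₂ + 2 ≤ Fintype.card V) {H : SimpleGraph V} [DecidableRel H.Adj]
    (hH : H ≤ Gᶜ) {v : V} (hv : m₁ < G.degree v) :
    ∑ y ∈ G.neighborFinset v, #(G.neighborFinset y ∩ H.neighborFinset v) +
      G.degree v * G.degree v ≤ (m₁ + m₂) * G.degree v := by
  calc _ = ∑ y ∈ G.neighborFinset v,
          (#(H.neighborFinset v ∩ G.neighborFinset y) + G.degree v) := by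
        simp only [sum_add_distrib, sum_const, card_neighborFinset_eq_degree, smul_eq_mul,
          inter_comm]
    _ ≤ ∑ y ∈ G.neighborFinset v, (m₁ + m₂) := sum_le_sum fun y hy =>
        card_neighborFinset_inter_add_degree_le h.not_contains hH
          ((mem_neighborFinset _ _ _).1 hy) hv (h.lt_degree hn y)
    _ = (m₁ + m₂) * G.degree v := by
        rw [sum_const, card_neighborFinset_eq_degree, smul_eq_mul, mul_comm]

lemma degree_le_or_degree_compl_le (h : NoMonochromaticDoubleStar G m₁ m₂)
    (hn₁ : 2 * m₁ + 2 ≤ Fintype.card V) (hn₂ : m₁ + 2 * m₂ + 2 ≤ Fintype.card V) (v : V) :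
    G.degree v ≤ m₁ ∨ Gᶜ.degree v ≤ m₁ := by
  by_contra! ⟨hR, hB⟩
  have hred := h.sum_card_inter_add_degree_mul_le hn₂ le_rfl hR
  have hblue := h.compl.sum_card_inter_add_degree_mul_le hn₂ (compl_compl G).ge hB
  have hdisj : Disjoint (G.neighborFinset v) (Gᶜ.neighborFinset v) :=
    Finset.disjoint_left.2 fun w hw hw' =>
      ((compl_adj _ _ _).1 ((mem_neighborFinset _ _ _).1 hw')).2 ((mem_neighborFinset _ _ _).1 hw)
  have hcross := G.sum_card_neighborFinset_inter_add_sum_card_compl_neighborFinset_inter hdisj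
  rw [card_neighborFinset_eq_degree, card_neighborFinset_eq_degree] at hcross
  have := three_mul_add_le_of_mul_add_sq_add_sq_le (by omega)
    (by nlinarith : G.degree v * Gᶜ.degree v + G.degree v * G.degree v +
      Gᶜ.degree v * Gᶜ.degree v ≤ (m₁ + m₂) * (G.degree v + Gᶜ.degree v))
  have := G.degree_add_degree_compl v
  omega

lemma card_compl_neighborFinset_inter_add_ite_le (h : NoMonochromaticDoubleStar G m₁ m₂)
    (hn₁ : 2 * m₁ + 2 ≤ Fintype.card V) (hn₂ : m₁ + 2 * m₂ + 2 ≤ Fintype.card V) {x y : V}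
    (hx : m₁ < G.degree x) (hy : G.degree y ≤ m₁) :
    #(Gᶜ.neighborFinset x ∩ G.neighborFinset y) +
      (if G.Adj x y then G.degree x + 1 else Gᶜ.degree y + 1) ≤ m₁ + m₂ + 1 := by
  split_ifs with hxy
  · have := card_neighborFinset_inter_add_degree_le h.not_contains le_rfl hxy hx
      (h.lt_degree hn₂ y)
    omega
  · have hyx : Gᶜ.Adj y x := (compl_adj _ _ _).2 ⟨by rintro rfl; omega, fun h' => hxy h'.symm⟩
    have := G.degree_add_degree_compl y
    have := card_neighborFinset_inter_add_degree_le h.not_contains_compl (compl_compl G).ge hyx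
      (by omega) (h.compl.lt_degree hn₂ x)
    rw [inter_comm] at this
    omega

theorem forall_degree_le_or_forall_degree_compl_le (h : NoMonochromaticDoubleStar G m₁ m₂)
    (hn₁ : 2 * m₁ + 2 ≤ Fintype.card V) (hn₂ : m₁ + 2 * m₂ + 2 ≤ Fintype.card V) :
    (∀ v, G.degree v ≤ m₁) ∨ (∀ v, Gᶜ.degree v ≤ m₁) := by
  by_contra! ⟨⟨u, hu⟩, w, hw⟩
  set s := univ.filter fun v => m₁ < G.degree v
  have hus : u ∈ s := by simpa [s] using hu
  have hws : w ∈ sᶜ := by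
    simpa [s] using (h.degree_le_or_degree_compl_le hn₁ hn₂ w).resolve_right hw.not_ge
  have hcount := G.sum_card_mul_card_add_le s (m₁ + m₂ + 1) fun x hx y hy =>
    h.card_compl_neighborFinset_inter_add_ite_le hn₁ hn₂ (by simpa [s] using hx)
      (by simpa [s] using hy)
  have hEF := G.sum_card_neighborFinset_inter_add_sum_card_compl_neighborFinset_inter
    (disjoint_compl_right (a := s))
  have := three_mul_card_add_card_le ⟨u, hus⟩ ⟨w, hws⟩ hEF hcount
  rw [card_add_card_compl] at this
  omega

end NoMonochromaticDoubleStar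

end SimpleGraph

theorem stmt_5 (m₁ m₂ n : ℕ) (hn : max (2 * m₁) (m₁ + 2 * m₂) + 2 ≤ n)
    (G : SimpleGraph (Fin n)) [DecidableRel G.Adj]
    (hred : ¬ Contains G (DoubleStar m₁ m₂))
    (hblue : ¬ Contains Gᶜ (DoubleStar m₁ m₂)) :
    (∀ v, G.degree v ≤ m₁) ∨ (∀ v, Gᶜ.degree v ≤ m₁) :=
  NoMonochromaticDoubleStar.forall_degree_le_or_forall_degree_compl_le ⟨hred, hblue⟩
    (by rw [Fintype.card_fin]; omega) (by rw [Fintype.card_fin]; omega)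
end

section
/- Let T be a tree whose two bipartition classes have sizes t₁ ≥ t₂ ≥ 2, and assume t₁ > 2t₂. Partition the vertex set of the complete graph on 2t₁ − 2 vertices into two sets of size t₁ − 1, colour all edges inside each set red and all edges between the two sets blue. Then this colouring contains no monochromatic copy of T. -/
open SimpleGraph

lemma sum_adj_isLeft {n : ℕ} {x y : Fin n ⊕ Fin n}
    (h : (completeGraph (Fin n) ⊕g completeGraph (Fin n)).Adj x y) :
    x.isLeft = y.isLeft := by
  cases x <;> cases y <;> simp_all [SimpleGraph.sum]

lemma compl_adj_isLeft {n : ℕ} {x y : Fin n ⊕ Fin n}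
    (h : (completeGraph (Fin n) ⊕g completeGraph (Fin n))ᶜ.Adj x y) :
    x.isLeft ≠ y.isLeft := by
  obtain ⟨hne, hna⟩ := h
  cases x <;> cases y <;> simp_all [SimpleGraph.sum, completeGraph]

lemma elim_id_inj {n : ℕ} {x y : Fin n ⊕ Fin n} (hs : x.isLeft = y.isLeft)
    (h : Sum.elim id id x = Sum.elim id id y) : x = y := by
  cases x <;> cases y <;> simp_all

theorem stmt_7 {V : Type*} [Fintype V] [DecidableEq V]
    (T : SimpleGraph V) (hT : T.IsTree)
    (t₁ t₂ : ℕ) (ht₂ : 2 ≤ t₂) (ht₁₂ : t₂ ≤ t₁) (ht : 2 * t₂ < t₁)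
    (C : T.Coloring Bool)
    (h₁ : (Finset.univ.filter fun v => C v = true).card = t₁)
    (h₂ : (Finset.univ.filter fun v => C v = false).card = t₂)
    -- the red graph of the canonical colouring of `K_{2t₁ - 2}`: the vertex set is
    -- split into two sets of size `t₁ - 1`, red edges are those inside a set, and
    -- blue edges (its complement) are those between the two sets
    (Red : SimpleGraph (Fin (t₁ - 1) ⊕ Fin (t₁ - 1)))
    (hRed : Red = completeGraph (Fin (t₁ - 1)) ⊕g completeGraph (Fin (t₁ - 1))) :
    ¬ Contains Red T ∧ ¬ Contains Redᶜ T := by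
  subst hRed
  have hconn := hT.isConnected
  have hcardV : Fintype.card V = t₁ + t₂ := by
    have e := Finset.card_filter_add_card_filter_not
      (s := (Finset.univ : Finset V)) (p := fun v => C v = true)
    have e2 : (Finset.univ.filter fun v => ¬ C v = true)
        = (Finset.univ.filter fun v => C v = false) := by
      ext v; simp
    rw [e2, h₁, h₂, Finset.card_univ] at e
    omega
  have hV : Nonempty V := by
    rw [← Fintype.card_pos_iff, hcardV]; omega
  obtain ⟨v₀⟩ := hV
  constructor
  · rintro ⟨f, hf⟩
    have hside : ∀ v, (f v).isLeft = (f v₀).isLeft := by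
      intro v
      obtain ⟨w⟩ := hconn v v₀
      induction w with
      | nil => rfl
      | cons h p ih => exact (sum_adj_isLeft (f.map_adj h)).trans ih
    have hinj : Function.Injective (fun v => Sum.elim id id (f v)) := by
      intro u v h
      exact hf (elim_id_inj ((hside u).trans (hside v).symm) h)
    have := Fintype.card_le_of_injective _ hinj
    simp [hcardV] at this
    omega
  · rintro ⟨f, hf⟩
    have hg : ∀ {u v}, T.Adj u v → (f u).isLeft ≠ (f v).isLeft :=
      fun h => compl_adj_isLeft (f.map_adj h)
    have step : ∀ {a b}, T.Adj a b → (((f a).isLeft = C a) ↔ ((f b).isLeft = C b)) := by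
      intro a b h
      have h1 := hg h
      have h2 := C.valid h
      cases hx : (f a).isLeft <;> cases hy : (f b).isLeft <;>
        cases hcx : C a <;> cases hcy : C b <;> simp_all
    have parity : ∀ u v, ((f u).isLeft = C u) ↔ ((f v).isLeft = C v) := by
      intro u v
      obtain ⟨w⟩ := hconn u v
      induction w with
      | nil => rfl
      | cons h p ih => exact (step h).trans ih
    have hsame : ∀ u v, C u = true → C v = true → (f u).isLeft = (f v).isLeft := by
      intro u v hu hv
      have := parity u v
      rw [hu, hv] at this
      cases hx : (f u).isLeft <;> cases hy : (f v).isLeft <;> simp_all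
    have hinj : Function.Injective
        (fun (x : {v // C v = true}) => Sum.elim id id (f x.1)) := by
      rintro ⟨u, hu⟩ ⟨v, hv⟩ h
      exact Subtype.ext (hf (elim_id_inj (hsame u v hu hv) h))
    have hle := Fintype.card_le_of_injective _ hinj
    rw [Fintype.card_subtype] at hle
    simp [h₁] at hle
    omega
end

section
/- Let m₁, m₂ be positive integers with ((√5 + 1)/2)·m₂ < m₁ < 3·m₂, and set m₃ := ⌈√(2m₁² + (m₁ + m₂/2)²) − (m₁ + m₂/2)⌉. Then m₃ > max{m₂, m₁ − m₂}. -/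
theorem stmt_9 (m₁ m₂ : ℕ) (hm₁ : 0 < m₁) (hm₂ : 0 < m₂)
    (hlow : (Real.sqrt 5 + 1) / 2 * m₂ < m₁) (hup : m₁ < 3 * m₂)
    (m₃ : ℤ)
    (hm₃ : m₃ = ⌈Real.sqrt (2 * m₁ ^ 2 + (m₁ + m₂ / 2) ^ 2) - (m₁ + m₂ / 2)⌉) :
    max (m₂ : ℤ) ((m₁ : ℤ) - m₂) < m₃ := by
  have h5 : Real.sqrt 5 ^ 2 = 5 := Real.sq_sqrt (by norm_num)
  have h5n : (0:ℝ) ≤ Real.sqrt 5 := Real.sqrt_nonneg 5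
  have hm1 : (1:ℝ) ≤ (m₁:ℝ) := by exact_mod_cast hm₁
  have hm2 : (1:ℝ) ≤ (m₂:ℝ) := by exact_mod_cast hm₂
  have hup' : (m₁:ℝ) < 3 * m₂ := by exact_mod_cast hup
  have key : ∀ c : ℝ, 0 ≤ ((m₁:ℝ) + (m₂:ℝ)/2) + c →
      2*(((m₁:ℝ) + (m₂:ℝ)/2)*c) + c^2 < 2*(m₁:ℝ)^2 →
      c < Real.sqrt (2 * (m₁:ℝ) ^ 2 + ((m₁:ℝ) + (m₂:ℝ)/2) ^ 2) - ((m₁:ℝ) + (m₂:ℝ)/2) := by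
    intro c hc h
    have h0 : (0:ℝ) ≤ 2 * (m₁:ℝ) ^ 2 + ((m₁:ℝ) + (m₂:ℝ)/2) ^ 2 := by positivity
    have hs := Real.sq_sqrt h0
    have hsn := Real.sqrt_nonneg (2 * (m₁:ℝ) ^ 2 + ((m₁:ℝ) + (m₂:ℝ)/2) ^ 2)
    nlinarith [sq_nonneg (Real.sqrt (2 * (m₁:ℝ) ^ 2 + ((m₁:ℝ) + (m₂:ℝ)/2) ^ 2) - (((m₁:ℝ) + (m₂:ℝ)/2) + c))]
  rw [hm₃]
  refine max_lt ?_ ?_ <;> rw [Int.lt_ceil] <;> push_cast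
  · refine key (m₂:ℝ) (by positivity) ?_
    have h' : Real.sqrt 5 * m₂ < 2*(m₁:ℝ) - m₂ := by nlinarith
    have h'' : (Real.sqrt 5 * m₂)^2 < (2*(m₁:ℝ) - m₂)^2 := by
      apply sq_lt_sq' <;> nlinarith
    nlinarith [h'']
  · refine key ((m₁:ℝ) - m₂) ?_ ?_
    · nlinarith
    · nlinarith
end
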